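/- Let T > 0, let A : [0,T] → M_{2m}(ℝ) be a smooth map and B₁, …, B_k ∈ M_{2m}(ℝ), let S : [0,T] → M_{2m}(ℝ) be the solution of Ṡ(t) = A(t)S(t), S(0) = I_{2m}, and define B_i⁰(t) := B_i, B_i^j(t) := (d/dt)B_i^{j−1}(t) + B_i^{j−1}(t)A(t) − A(t)B_i^{j−1}(t). Let P ∈ M_{2m}(ℝ) be such that tr[ Pᵀ · S(T)·Σ_{i=1}^k ∫₀ᵀ v_i(t) S(t)⁻¹ B_i S(t) dt ] = 0 for every v ∈ L²([0,T]; ℝᵏ) (i.e. P is orthogonal, for the trace inner product, to the image of the differential at u ≡ 0 of the End-Point mapping). Then for every t ∈ [0,T], every j ≥ 0 and every i = 1, …, k, tr[ Pᵀ S(T) S(t)⁻¹ B_i^j(t) S(t) ] = 0. -/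

import Mathlib

/-!
Put `φ_j(t) := tr[Pᵀ S(T) S(t)⁻¹ B_i^j(t) S(t)]`. Since `d/dt (S⁻¹ X S) = S⁻¹ (Ẋ + X A − A X) S`,
which is exactly the recursion defining `B_i^j`, we have `φ_j' = φ_{j+1}` on `[0,T]`. Testing the
hypothesis with the control `v = φ_0 e_i` gives `∫₀ᵀ φ_0² = 0`, so the continuous function `φ_0`
vanishes on `[0,T]`, and then so do all its derivatives `φ_j`. The matrices `S(t)` are invertible
because a vector `w` with `S(t) w = 0` makes `r ↦ S(r) w` a solution of `ẋ = A x` vanishing at `t`,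
hence at `0`, by uniqueness for this linear ODE.
-/

open MeasureTheory Matrix

namespace Stmt5

/-- The space `M_{2m}(ℝ)`, with indices `Fin m ⊕ Fin m`. -/
abbrev Mat (m : ℕ) := Matrix (Fin m ⊕ Fin m) (Fin m ⊕ Fin m) ℝ

/-- `B⁰(t) := B`, `B^{j+1}(t) := (d/dt)B^j(t) + B^j(t)A(t) − A(t)B^j(t)`,
derivatives taken within `[0,T]`. -/
noncomputable def Bseq {m : ℕ} (T : ℝ) (A : ℝ → Mat m) (B : Mat m) : ℕ → ℝ → Mat m
  | 0, _ => B
  | j + 1, t =>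
      (Matrix.of fun a b => derivWithin (fun r => Bseq T A B j r a b) (Set.Icc 0 T) t)
        + (Bseq T A B j t * A t - A t * Bseq T A B j t)

end Stmt5

open Set

-- Any norm would do; the `ℓ∞` operator norm makes square matrices a normed algebra.
attribute [local instance] Matrix.linftyOpNormedAddCommGroup Matrix.linftyOpNormedSpace
  Matrix.linftyOpNormedRing Matrix.linftyOpNormedAlgebra

section
variable {ι κ : Type*} [Fintype ι] [Fintype κ] {X : ℝ → Matrix ι κ ℝ} {X' : Matrix ι κ ℝ}
  {s : Set ℝ} {t : ℝ}

theorem hasDerivWithinAt_matrix_iff :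
    HasDerivWithinAt X X' s t ↔ ∀ a b, HasDerivWithinAt (fun r => X r a b) (X' a b) s t := by
  let e : Matrix ι κ ℝ ≃L[ℝ] (ι → κ → ℝ) :=
    (Matrix.ofLinearEquiv ℝ).symm.toContinuousLinearEquiv
  have he : HasDerivWithinAt X X' s t ↔ HasDerivWithinAt (fun r => e (X r)) (e X') s t :=
    ⟨e.hasFDerivAt.comp_hasDerivWithinAt t, e.symm.hasFDerivAt.comp_hasDerivWithinAt t⟩
  rw [he, hasDerivWithinAt_pi]
  exact forall_congr' fun a => hasDerivWithinAt_pi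

end

section
variable {n : Type*} [Fintype n] {s : Set ℝ} {t : ℝ}

theorem HasDerivWithinAt.matrix_trace {X : ℝ → Matrix n n ℝ} {X' : Matrix n n ℝ}
    (h : HasDerivWithinAt X X' s t) : HasDerivWithinAt (fun r => (X r).trace) X'.trace s t :=
  HasDerivWithinAt.fun_sum fun a _ => hasDerivWithinAt_matrix_iff.1 h a a

theorem HasDerivWithinAt.matrix_mulVec {S : ℝ → Matrix n n ℝ} {S' : Matrix n n ℝ}
    (h : HasDerivWithinAt S S' s t) (w : n → ℝ) :
    HasDerivWithinAt (fun r => S r *ᵥ w) (S' *ᵥ w) s t :=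
  hasDerivWithinAt_pi.2 fun a =>
    HasDerivWithinAt.fun_sum fun b _ => (hasDerivWithinAt_matrix_iff.1 h a b).mul_const (w b)

variable [DecidableEq n]

theorem HasDerivWithinAt.matrix_inv {S : ℝ → Matrix n n ℝ} {S' : Matrix n n ℝ}
    (h : HasDerivWithinAt S S' s t) (hS : IsUnit (S t)) :
    HasDerivWithinAt (fun r => (S r)⁻¹) (-((S t)⁻¹ * S' * (S t)⁻¹)) s t := by
  obtain ⟨u, hu⟩ := hS
  have hinv := hasFDerivAt_ringInverse (𝕜 := ℝ) u
  rw [← Ring.inverse_unit, hu, ← nonsing_inv_eq_ringInverse] at hinv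
  simp_rw [nonsing_inv_eq_ringInverse] at hinv ⊢
  exact hinv.comp_hasDerivWithinAt t h

theorem HasDerivWithinAt.matrix_conj {S X : ℝ → Matrix n n ℝ} {A X' : Matrix n n ℝ}
    (hS : HasDerivWithinAt S (A * S t) s t) (hSu : IsUnit (S t))
    (hX : HasDerivWithinAt X X' s t) :
    HasDerivWithinAt (fun r => (S r)⁻¹ * X r * S r)
      ((S t)⁻¹ * (X' + (X t * A - A * X t)) * S t) s t := by
  have hinv : S t * (S t)⁻¹ = 1 := Matrix.mul_nonsing_inv _ ((isUnit_iff_isUnit_det _).1 hSu)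
  refine (((hS.matrix_inv hSu).fun_mul hX).fun_mul hS).congr_deriv ?_
  simp only [mul_add, add_mul, mul_sub, sub_mul, mul_assoc, neg_mul, hinv, mul_one]
  abel

theorem isUnit_of_hasDerivWithinAt_mul {A S : ℝ → Matrix n n ℝ} {T : ℝ}
    (hA : ContinuousOn A (Icc 0 T)) (hS0 : S 0 = 1)
    (hS : ∀ t ∈ Icc 0 T, HasDerivWithinAt S (A t * S t) (Icc 0 T) t) {t : ℝ}
    (ht : t ∈ Icc 0 T) : IsUnit (S t) := by
  rw [Matrix.isUnit_iff_isUnit_det, isUnit_iff_ne_zero]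
  intro hdet
  obtain ⟨w, hw0, hw⟩ := Matrix.exists_mulVec_eq_zero_iff.2 hdet
  obtain ⟨C, hC⟩ := isCompact_Icc.exists_bound_of_continuousOn hA
  have hlip : ∀ r ∈ Ioc 0 t, LipschitzOnWith C.toNNReal (A r *ᵥ ·) univ := by
    refine fun r hr => (LipschitzWith.of_dist_le_mul fun x y => ?_).lipschitzOnWith
    rw [dist_eq_norm, dist_eq_norm, ← Matrix.mulVec_sub]
    exact (Matrix.linfty_opNorm_mulVec _ _).trans (mul_le_mul_of_nonneg_right
      ((hC r ⟨hr.1.le, hr.2.trans ht.2⟩).trans (Real.le_coe_toNNReal C)) (norm_nonneg _))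
  have hsol : ∀ r ∈ Icc 0 t,
      HasDerivWithinAt (fun r => S r *ᵥ w) (A r *ᵥ (S r *ᵥ w)) (Icc 0 T) r := fun r hr => by
    simpa only [Matrix.mulVec_mulVec] using (hS r ⟨hr.1, hr.2.trans ht.2⟩).matrix_mulVec w
  have hw_eq : EqOn (fun r => S r *ᵥ w) (fun _ => 0) (Icc 0 t) :=
    ODE_solution_unique_of_mem_Icc_left hlip
      (fun r hr => (hsol r hr).continuousWithinAt.mono (Icc_subset_Icc_right ht.2))
      (fun r hr => (hsol r (Ioc_subset_Icc_self hr)).mono_of_mem_nhdsWithin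
        (Icc_mem_nhdsLE_of_mem ⟨hr.1, hr.2.trans ht.2⟩))
      (fun _ _ => mem_univ _) continuousOn_const
      (fun r _ => by simpa using hasDerivWithinAt_const r _ (0 : n → ℝ)) (fun _ _ => mem_univ _)
      hw
  exact hw0 (by simpa [hS0] using hw_eq (left_mem_Icc.2 ht.1))

end

section
variable {n ι : Type*} [Fintype n] [Fintype ι]

theorem intervalIntegral_mul_trace_mul {a b : ℝ} (Q : Matrix n n ℝ) (u : ℝ → ℝ)
    (C : ℝ → Matrix n n ℝ) (hint : ∀ p q, IntervalIntegrable (fun t => u t * C t p q) volume a b) :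
    ∫ t in a..b, u t * trace (Q * C t) = ∑ p, ∑ q, Q p q * ∫ t in a..b, u t * C t q p := by
  have hsum : ∀ t, u t * trace (Q * C t) = ∑ p, ∑ q, Q p q * (u t * C t q p) := fun t => by
    simp only [trace, diag, mul_apply, Finset.mul_sum]
    exact Finset.sum_congr rfl fun p _ => Finset.sum_congr rfl fun q _ => by ring
  simp_rw [hsum]
  have hint' : ∀ p, IntervalIntegrable (fun t => ∑ q, Q p q * (u t * C t q p)) volume a b :=
    fun p => by
      simpa only [Finset.sum_fn] using IntervalIntegrable.sum _ fun q _ => (hint q p).const_mul _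
  rw [intervalIntegral.integral_finsetSum fun p _ => hint' p]
  refine Finset.sum_congr rfl fun p _ => ?_
  rw [intervalIntegral.integral_finsetSum fun q _ => (hint q p).const_mul _]
  simp only [intervalIntegral.integral_const_mul]

theorem trace_mul_of_sum_intervalIntegral {a b : ℝ} (Q : Matrix n n ℝ) (v : ℝ → ι → ℝ)
    (C : ι → ℝ → Matrix n n ℝ)
    (hint : ∀ i p q, IntervalIntegrable (fun t => v t i * C i t p q) volume a b) :
    trace (Q * of fun p q => ∑ i, ∫ t in a..b, v t i * C i t p q) =
      ∑ i, ∫ t in a..b, v t i * trace (Q * C i t) := by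
  rw [Finset.sum_congr rfl fun i _ => intervalIntegral_mul_trace_mul Q (v · i) (C i) (hint i)]
  simp only [trace, diag, mul_apply, of_apply, Finset.mul_sum]
  rw [Finset.sum_comm (s := Finset.univ (α := ι))]
  refine Finset.sum_congr rfl fun p _ => ?_
  rw [Finset.sum_comm]

theorem ContinuousOn.eqOn_zero_of_integral_mul_self_eq_zero {g : ℝ → ℝ} {a b : ℝ} (hab : a < b)
    (hg : ContinuousOn g (Icc a b)) (h : ∫ t in a..b, g t * g t = 0) : EqOn g 0 (Icc a b) := by
  intro t ht
  by_contra hgt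
  refine (intervalIntegral.integral_pos hab (hg.mul hg) (fun x _ => mul_self_nonneg (g x))
    ⟨t, ht, mul_self_pos.2 hgt⟩).ne' h

theorem ContinuousOn.memLp_restrict_Ioc {E : Type*} [NormedAddCommGroup E] {f : ℝ → E}
    {a b : ℝ} (hf : ContinuousOn f (Icc a b)) (p : ENNReal) :
    MemLp f p (volume.restrict (Ioc a b)) := by
  obtain ⟨C, hC⟩ := isCompact_Icc.exists_bound_of_continuousOn hf
  refine MemLp.of_bound ((hf.mono Ioc_subset_Icc_self).aestronglyMeasurable measurableSet_Ioc) C ?_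
  filter_upwards [ae_restrict_mem measurableSet_Ioc] with t ht
  exact hC t (Ioc_subset_Icc_self ht)

theorem trace_mul_eq_zero_of_forall_memLp [DecidableEq ι] {a b : ℝ} (hab : a < b)
    {Q : Matrix n n ℝ} {C : ι → ℝ → Matrix n n ℝ} (hC : ∀ i, ContinuousOn (C i) (Icc a b))
    (hQ : ∀ v : ℝ → ι → ℝ, MemLp v 2 (volume.restrict (Ioc a b)) →
      trace (Q * of fun p q => ∑ i, ∫ t in a..b, v t i * C i t p q) = 0)
    (i : ι) : EqOn (fun t => trace (Q * C i t)) 0 (Icc a b) := by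
  set ψ : ℝ → ℝ := fun t => trace (Q * C i t)
  have hψ : ContinuousOn ψ (Icc a b) := by fun_prop
  set v : ℝ → ι → ℝ := fun t => Pi.single i (ψ t)
  have hv : ContinuousOn v (Icc a b) := (continuous_single i).comp_continuousOn hψ
  have hint : ∀ i' p q, IntervalIntegrable (fun t => v t i' * C i' t p q) volume a b :=
    fun i' p q => ContinuousOn.intervalIntegrable <| by
      rw [uIcc_of_le hab.le]
      exact ((continuous_apply i').comp_continuousOn hv).mul (by fun_prop)
  have hvQ := hQ v (hv.memLp_restrict_Ioc 2)
  rw [trace_mul_of_sum_intervalIntegral Q v C hint,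
    Fintype.sum_eq_single i fun i' hi' => by simp [v, hi']] at hvQ
  exact hψ.eqOn_zero_of_integral_mul_self_eq_zero hab (by simpa only [v, Pi.single_eq_same] using hvQ)

end

namespace Stmt5

variable {m : ℕ} {T : ℝ} {A : ℝ → Mat m}

theorem contDiffOn_Bseq (hT : 0 < T)
    (hA : ∀ a b, ContDiffOn ℝ (⊤ : ℕ∞) (fun t => A t a b) (Icc 0 T)) (B : Mat m) (j : ℕ)
    (a b : Fin m ⊕ Fin m) : ContDiffOn ℝ (⊤ : ℕ∞) (fun t => Bseq T A B j t a b) (Icc 0 T) := by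
  induction j generalizing a b with
  | zero => exact contDiffOn_const
  | succ j ih =>
    simp only [Bseq, Matrix.add_apply, of_apply, Matrix.sub_apply, mul_apply]
    exact ((ih a b).derivWithin (uniqueDiffOn_Icc hT) (by simp)).add
      ((ContDiffOn.sum fun c _ => (ih a c).mul (hA c b)).sub
        (ContDiffOn.sum fun c _ => (hA a c).mul (ih c b)))

theorem hasDerivWithinAt_conj_Bseq (hT : 0 < T)
    (hA : ∀ a b, ContDiffOn ℝ (⊤ : ℕ∞) (fun t => A t a b) (Icc 0 T)) (B : Mat m) (j : ℕ)
    {S : ℝ → Mat m} {t : ℝ} (ht : t ∈ Icc 0 T)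
    (hS : HasDerivWithinAt S (A t * S t) (Icc 0 T) t) (hSu : IsUnit (S t)) :
    HasDerivWithinAt (fun r => (S r)⁻¹ * Bseq T A B j r * S r)
      ((S t)⁻¹ * Bseq T A B (j + 1) t * S t) (Icc 0 T) t :=
  hS.matrix_conj hSu <| hasDerivWithinAt_matrix_iff.2 fun a b =>
    ((contDiffOn_Bseq hT hA B j a b).differentiableOn (by simp) t ht).hasDerivWithinAt

/-- **Lemma `LEM20sept1`**: if `P` is orthogonal (for the trace inner product) to the image
of the differential at `u ≡ 0` of the End-Point mapping, i.e.
`tr[Pᵀ S(T) Σ_i ∫₀ᵀ v_i(t) S(t)⁻¹ B_i S(t) dt] = 0` for every `v ∈ L²([0,T];ℝᵏ)`, then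
`tr[Pᵀ S(T) S(t)⁻¹ B_i^j(t) S(t)] = 0` for every `t ∈ [0,T]`, every `j ≥ 0` and every `i`. -/
theorem trace_orthogonality {m k : ℕ} (T : ℝ) (hT : 0 < T)
    (A : ℝ → Mat m) (B : Fin k → Mat m)
    (hA : ∀ a b, ContDiffOn ℝ (⊤ : ℕ∞) (fun t => A t a b) (Set.Icc 0 T))
    (S : ℝ → Mat m) (hS0 : S 0 = 1)
    (hS : ∀ t ∈ Set.Icc (0 : ℝ) T, ∀ a b,
      HasDerivWithinAt (fun r => S r a b) ((A t * S t) a b) (Set.Icc 0 T) t)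
    (P : Mat m)
    (hP : ∀ v : ℝ → Fin k → ℝ, MemLp v 2 (volume.restrict (Set.Ioc 0 T)) →
      Matrix.trace (Pᵀ *
        Matrix.of (fun a b =>
          ∑ i, ∫ t in (0 : ℝ)..T, v t i * (S T * ((S t)⁻¹ * B i * S t)) a b)) = 0) :
    ∀ t ∈ Set.Icc (0 : ℝ) T, ∀ (j : ℕ) (i : Fin k),
      Matrix.trace (Pᵀ * (S T * ((S t)⁻¹ * Bseq T A (B i) j t * S t))) = 0 := by
  intro t ht j i
  have hSd : ∀ t ∈ Icc 0 T, HasDerivWithinAt S (A t * S t) (Icc 0 T) t :=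
    fun t ht => hasDerivWithinAt_matrix_iff.2 (hS t ht)
  have hAc : ContinuousOn A (Icc 0 T) :=
    continuousOn_pi.2 fun a => continuousOn_pi.2 fun b => (hA a b).continuousOn
  have hSu : ∀ t ∈ Icc 0 T, IsUnit (S t) :=
    fun t ht => isUnit_of_hasDerivWithinAt_mul hAc hS0 hSd ht
  have hφ : ∀ j, ∀ t ∈ Icc 0 T, HasDerivWithinAt
      (fun r => trace (Pᵀ * (S T * ((S r)⁻¹ * Bseq T A (B i) j r * S r))))
      (trace (Pᵀ * (S T * ((S t)⁻¹ * Bseq T A (B i) (j + 1) t * S t)))) (Icc 0 T) t :=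
    fun j t ht => (((hasDerivWithinAt_conj_Bseq hT hA (B i) j ht (hSd t ht) (hSu t ht)).const_mul
      (S T)).const_mul Pᵀ).matrix_trace
  induction j generalizing t with
  | zero =>
    have hSc : ContinuousOn S (Icc 0 T) := fun t ht => (hSd t ht).continuousWithinAt
    have hSic : ContinuousOn (fun t => (S t)⁻¹) (Icc 0 T) :=
      fun t ht => ((hSd t ht).matrix_inv (hSu t ht)).continuousWithinAt
    exact trace_mul_eq_zero_of_forall_memLp hT
      (fun i => continuousOn_const.mul ((hSic.mul continuousOn_const).mul hSc)) hP i ht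
  | succ j ih =>
    exact (uniqueDiffOn_Icc hT t ht).eq_deriv _ (hφ j t ht)
      ((hasDerivWithinAt_const t _ 0).congr ih (ih t ht))

end Stmt5
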